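/- arXiv:2105.09775 — 2 statements merged into one kernel-verified Lean document; each statement's English description precedes it below -/
import Mathlib

section
/- Let n, k be natural numbers with 1 ≤ k ≤ n and n+1 ≤ 2k, and let A be an invertible (n+1)×(n+1) complex k-tridiagonal matrix. Then the inverse matrix A⁻¹ is also k-tridiagonal; that is, (A⁻¹)_{ij} = 0 whenever |i−j| ∉ {0, k}. -/
/-
When `n + 1 ≤ 2 * k`, two steps of length `k` within `{0, …, n}` can only go back and forth,
so `k`-tridiagonal matrices are closed under multiplication and form a subalgebra of the full
matrix algebra. A unit of a finite-dimensional algebra has its inverse in every subalgebra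
containing it (the subalgebra is Artinian, so a non-zero-divisor of it is a unit of it), hence
`A⁻¹` is `k`-tridiagonal.
-/

/-- `A` is `k`-tridiagonal: `A i j = 0` whenever `|i - j| ∉ {0, k}`. -/
def KTridiagonal (n k : ℕ) (A : Matrix (Fin (n+1)) (Fin (n+1)) ℂ) : Prop :=
  ∀ i j : Fin (n+1), |(i : ℤ) - (j : ℤ)| ≠ 0 → |(i : ℤ) - (j : ℤ)| ≠ k → A i j = 0

open nonZeroDivisors in
theorem Subalgebra.ringInverse_mem {K A : Type*} [Field K] [Ring A] [Algebra K A]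
    [FiniteDimensional K A] (S : Subalgebra K A) {a : A} (ha : a ∈ S) :
    Ring.inverse a ∈ S := by
  by_cases hunit : IsUnit a
  · have hS : (⟨a, ha⟩ : S) ∈ S⁰ :=
      comap_nonZeroDivisors_le_of_injective (f := S.val) Subtype.val_injective
        hunit.mem_nonZeroDivisors
    obtain ⟨u, hu⟩ := IsArtinianRing.isUnit_of_nonZeroDivisor_of_isIntegral' (R := K) hS
    have hinv : Ring.inverse a = ((u⁻¹ : Sˣ) : S) := by
      have hua : ((u : S) : A) = a := congrArg Subtype.val hu
      rw [← hua]
      exact Ring.inverse_unit (Units.map (S.val : S →* A) u)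
    exact hinv ▸ Subtype.prop _
  · exact Ring.inverse_non_unit a hunit ▸ S.zero_mem

theorem abs_sub_eq_zero_or_eq_of_two_mul_gt {n k : ℕ} (h2k : n + 1 ≤ 2 * k) {i l j : ℤ}
    (hi : 0 ≤ i ∧ i ≤ n) (hj : 0 ≤ j ∧ j ≤ n)
    (hil : |i - l| = 0 ∨ |i - l| = k) (hlj : |l - j| = 0 ∨ |l - j| = k) :
    |i - j| = 0 ∨ |i - j| = k := by
  grind

namespace KTridiagonal

variable {n k : ℕ}

theorem of_ne_zero {A : Matrix (Fin (n+1)) (Fin (n+1)) ℂ}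
    (hA : ∀ i j, A i j ≠ 0 → |(i : ℤ) - j| = 0 ∨ |(i : ℤ) - j| = k) : KTridiagonal n k A :=
  fun i j h0 hk => by_contra fun hij => (hA i j hij).elim h0 hk

theorem eq_zero_or_eq {A : Matrix (Fin (n+1)) (Fin (n+1)) ℂ} (hA : KTridiagonal n k A)
    {i j : Fin (n+1)} (hij : A i j ≠ 0) : |(i : ℤ) - j| = 0 ∨ |(i : ℤ) - j| = k := by
  by_contra h
  exact hij (hA i j (fun h0 => h (.inl h0)) fun hk => h (.inr hk))

theorem mul (h2k : n + 1 ≤ 2 * k) {A B : Matrix (Fin (n+1)) (Fin (n+1)) ℂ}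
    (hA : KTridiagonal n k A) (hB : KTridiagonal n k B) : KTridiagonal n k (A * B) := by
  refine of_ne_zero fun i j hij => ?_
  rw [Matrix.mul_apply] at hij
  obtain ⟨l, -, hl⟩ := Finset.exists_ne_zero_of_sum_ne_zero hij
  have hi : (i : ℕ) ≤ n := Nat.lt_succ_iff.mp i.isLt
  have hj : (j : ℕ) ≤ n := Nat.lt_succ_iff.mp j.isLt
  exact abs_sub_eq_zero_or_eq_of_two_mul_gt h2k (by omega) (by omega)
    (hA.eq_zero_or_eq (left_ne_zero_of_mul hl)) (hB.eq_zero_or_eq (right_ne_zero_of_mul hl))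

end KTridiagonal

def kTridiagonalSubalgebra (n k : ℕ) (h2k : n + 1 ≤ 2 * k) :
    Subalgebra ℂ (Matrix (Fin (n+1)) (Fin (n+1)) ℂ) where
  carrier := {A | KTridiagonal n k A}
  mul_mem' := KTridiagonal.mul h2k
  add_mem' {A B} hA hB i j h0 hk := by simp [hA i j h0 hk, hB i j h0 hk]
  algebraMap_mem' c i j h0 _ := by
    have hij : i ≠ j := by rintro rfl; simp at h0
    simp [Matrix.algebraMap_eq_diagonal, Matrix.diagonal_apply_ne _ hij]

theorem stmt5_general (n k : ℕ) (h2k : n + 1 ≤ 2 * k)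
    (A : Matrix (Fin (n+1)) (Fin (n+1)) ℂ)
    (hA : KTridiagonal n k A) :
    KTridiagonal n k A⁻¹ := by
  rw [Matrix.nonsing_inv_eq_ringInverse]
  exact (kTridiagonalSubalgebra n k h2k).ringInverse_mem hA

theorem stmt5 (n k : ℕ) (hk : 1 ≤ k) (hkn : k ≤ n) (h2k : n + 1 ≤ 2 * k)
    (A : Matrix (Fin (n+1)) (Fin (n+1)) ℂ)
    (hA : KTridiagonal n k A) (hU : IsUnit A) :
    KTridiagonal n k A⁻¹ :=
  stmt5_general n k h2k A hA
end

section
/- Let n, k be natural numbers with 1 ≤ k ≤ n and n+1 ≤ 2k. Let a_0,...,a_{n−k}, b_0,...,b_n, c_0,...,c_{n−k} be complex numbers and let A be the (n+1)×(n+1) k-tridiagonal matrix with A_{j+k,j} = a_j and A_{j,j+k} = c_j for j = 0,...,n−k, A_{jj} = b_j for j = 0,...,n, and all other entries zero. Then det A = (∏_{j=n+1−k}^{k−1} b_j) · (∏_{j=0}^{n−k} (b_j·b_{j+k} − a_j·c_j)). -/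
/-!
With `m = n + 1 - k` and `s = 2k - (n + 1)`, the hypothesis `n + 1 ≤ 2k` says that the indices
split into the `m` pairs `{j, j + k}` (`j < m`) and the `s` unpaired middle indices `m, …, k - 1`,
and every off-diagonal entry of `A` links the two members of a pair. Listing the indices as
`0, …, m-1 | k, …, k+m-1 | m, …, k-1` turns `A` into the block matrix
`[[diag b_j, diag c_j, 0], [diag a_j, diag b_{j+k}, 0], [0, 0, diag b_t]]`, and a `2 × 2` block
matrix of diagonal matrices is conjugate to the block-diagonal matrix of the `2 × 2` matrices
`[[b j, c j], [a j, b (j + k)]]`.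
-/

open Matrix

def kTridiagonal {R : Type*} [Zero R] (k : ℕ) (a b c : ℕ → R) (N : ℕ) :
    Matrix (Fin N) (Fin N) R :=
  of fun i j =>
    if (i : ℕ) = j then b i
    else if (i : ℕ) = j + k then a j
    else if (j : ℕ) = i + k then c i
    else 0

def finTwoProdEquivSum (ι : Type*) : Fin 2 × ι ≃ ι ⊕ ι :=
  (finTwoEquiv.prodCongr (Equiv.refl ι)).trans (Equiv.boolProdEquivSum ι)

theorem fromBlocks_diagonal_submatrix_eq_blockDiagonal {ι R : Type*} [DecidableEq ι] [Zero R]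
    (p q r s : ι → R) :
    (fromBlocks (diagonal p) (diagonal q) (diagonal r) (diagonal s)).submatrix
        (finTwoProdEquivSum ι) (finTwoProdEquivSum ι) =
      blockDiagonal fun i => !![p i, q i; r i, s i] := by
  ext ⟨x, i⟩ ⟨y, j⟩
  fin_cases x <;> fin_cases y <;>
    simp [finTwoProdEquivSum, blockDiagonal_apply, diagonal_apply, finTwoEquiv]

theorem det_fromBlocks_diagonal {ι R : Type*} [Fintype ι] [DecidableEq ι] [CommRing R]
    (p q r s : ι → R) :
    (fromBlocks (diagonal p) (diagonal q) (diagonal r) (diagonal s)).det =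
      ∏ i, (p i * s i - q i * r i) := by
  rw [← det_submatrix_equiv_self (finTwoProdEquivSum ι),
    fromBlocks_diagonal_submatrix_eq_blockDiagonal, det_blockDiagonal]
  simp only [det_fin_two_of]

/-- The two copies of `Fin m` are the two members of the pairs `{j, j + k}`, `k = m + s`. -/
def kTridiagonalIndexEquiv (m s : ℕ) : (Fin m ⊕ Fin m) ⊕ Fin s ≃ Fin (m + s + m) :=
  (Equiv.sumAssoc _ _ _).trans <| (Equiv.sumCongr (Equiv.refl _) (Equiv.sumComm _ _)).trans <|
    (Equiv.sumAssoc _ _ _).symm.trans <|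
      (Equiv.sumCongr finSumFinEquiv (Equiv.refl _)).trans finSumFinEquiv

section kTridiagonalIndexEquiv

variable (m s : ℕ)

@[simp]
theorem kTridiagonalIndexEquiv_inl_inl (j : Fin m) :
    (kTridiagonalIndexEquiv m s (.inl (.inl j)) : ℕ) = j := by
  simp [kTridiagonalIndexEquiv]

@[simp]
theorem kTridiagonalIndexEquiv_inl_inr (j : Fin m) :
    (kTridiagonalIndexEquiv m s (.inl (.inr j)) : ℕ) = j + (m + s) := by
  simp [kTridiagonalIndexEquiv, add_comm]

@[simp]
theorem kTridiagonalIndexEquiv_inr (t : Fin s) :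
    (kTridiagonalIndexEquiv m s (.inr t) : ℕ) = m + t := by
  simp [kTridiagonalIndexEquiv]

end kTridiagonalIndexEquiv

theorem kTridiagonal_submatrix_indexEquiv {R : Type*} [Zero R] (m s : ℕ) (a b c : ℕ → R) :
    (kTridiagonal (m + s) a b c (m + s + m)).submatrix
        (kTridiagonalIndexEquiv m s) (kTridiagonalIndexEquiv m s) =
      fromBlocks
        (fromBlocks (diagonal fun j : Fin m => b j) (diagonal fun j : Fin m => c j)
          (diagonal fun j : Fin m => a j) (diagonal fun j : Fin m => b (j + (m + s))))
        0 0 (diagonal fun t : Fin s => b (m + t)) := by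
  ext (⟨i | i⟩ | i) (⟨j | j⟩ | j) <;>
    simp only [kTridiagonal, submatrix_apply, of_apply, kTridiagonalIndexEquiv_inl_inl,
      kTridiagonalIndexEquiv_inl_inr, kTridiagonalIndexEquiv_inr, fromBlocks_apply₁₁,
      fromBlocks_apply₁₂, fromBlocks_apply₂₁, fromBlocks_apply₂₂, diagonal_apply,
      Matrix.zero_apply, Fin.ext_iff] <;>
    split_ifs <;> first | rfl | omega | congr 1; omega

theorem det_kTridiagonal {R : Type*} [CommRing R] {k N m s : ℕ} (hk : k = m + s)
    (hN : N = k + m) (a b c : ℕ → R) :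
    (kTridiagonal k a b c N).det =
      (∏ t : Fin s, b (m + t)) * ∏ j : Fin m, (b j * b (j + k) - a j * c j) := by
  subst hk hN
  rw [← det_submatrix_equiv_self (kTridiagonalIndexEquiv m s), kTridiagonal_submatrix_indexEquiv,
    det_fromBlocks_zero₂₁, det_fromBlocks_diagonal, det_diagonal, mul_comm]
  simp_rw [mul_comm (c _)]

theorem stmt7_general (n k : ℕ) (hkn : k ≤ n) (h2k : n + 1 ≤ 2 * k)
    (a b c : ℕ → ℂ)
    (A : Matrix (Fin (n+1)) (Fin (n+1)) ℂ)
    (hA : A = Matrix.of fun i j : Fin (n+1) =>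
      if (i : ℕ) = (j : ℕ) then b i
      else if (i : ℕ) = (j : ℕ) + k then a j
      else if (j : ℕ) = (i : ℕ) + k then c i
      else 0) :
    A.det = (∏ j ∈ Finset.Icc (n + 1 - k) (k - 1), b j) *
      ∏ j ∈ Finset.Icc 0 (n - k), (b j * b (j + k) - a j * c j) := by
  obtain ⟨m, s, hk, hN⟩ : ∃ m s, k = m + s ∧ n + 1 = k + m :=
    ⟨n + 1 - k, 2 * k - (n + 1), by omega, by omega⟩
  have hmiddle : Finset.Icc (n + 1 - k) (k - 1) = Finset.Ico m (m + s) := by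
    ext; simp only [Finset.mem_Icc, Finset.mem_Ico]; omega
  have hpairs : Finset.Icc 0 (n - k) = Finset.range m := by
    rw [← Nat.range_succ_eq_Icc_zero]; congr 1; omega
  rw [hA, hmiddle, hpairs, Finset.prod_Ico_eq_prod_range, Nat.add_sub_cancel_left,
    ← Fin.prod_univ_eq_prod_range,
    ← Fin.prod_univ_eq_prod_range (fun j => b j * b (j + k) - a j * c j)]
  exact det_kTridiagonal hk hN a b c

theorem stmt7 (n k : ℕ) (hk : 1 ≤ k) (hkn : k ≤ n) (h2k : n + 1 ≤ 2 * k)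
    (a b c : ℕ → ℂ)
    (A : Matrix (Fin (n+1)) (Fin (n+1)) ℂ)
    (hA : A = Matrix.of fun i j : Fin (n+1) =>
      if (i : ℕ) = (j : ℕ) then b i
      else if (i : ℕ) = (j : ℕ) + k then a j
      else if (j : ℕ) = (i : ℕ) + k then c i
      else 0) :
    A.det = (∏ j ∈ Finset.Icc (n + 1 - k) (k - 1), b j) *
      ∏ j ∈ Finset.Icc 0 (n - k), (b j * b (j + k) - a j * c j) :=
  stmt7_general n k hkn h2k a b c A hA
end
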